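/- arXiv:2312.11001 — 5 statements merged into one kernel-verified Lean document; each statement's English description precedes it below -/
import Mathlib

section
/- Let Σ be a positive semidefinite matrix indexed by a finite set V, and let A, B, C ⊆ V be disjoint. If the Schur complement condition holds — namely Σ_{A∪C, B∪C} has rank |C| and Σ_{C,C} is invertible — then Σ_{A,B} = Σ_{A,C} Σ_{C,C}^{-1} Σ_{C,B}. -/
/-!
Write `Σ_{A∪C,B∪C}` as the block matrix `[P Q; R S]` with `S = Σ_{C,C}` invertible. The LDU
factorisation through the Schur complement `Z = P - Q S⁻¹ R` multiplies it on both sides by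
invertible matrices into `[Z 0; 0 S]`, which therefore also has rank `|C|`. A nonzero entry of
`Z` together with `S` would give an invertible minor of size `|C| + 1`, so `Z = 0`.
-/

open Matrix

namespace Matrix

variable {K : Type*} [Field K] {l m n : Type*} [Fintype m] [Fintype n] [DecidableEq n]

theorem eq_zero_of_rank_fromBlocks_zero_eq_card (Z : Matrix l m K) {S : Matrix n n K}
    (hS : IsUnit S) (hrank : (fromBlocks Z 0 0 S).rank = Fintype.card n) : Z = 0 := by
  ext a b
  by_contra hab
  let minor := (fromBlocks Z 0 0 S).submatrix
    (Sum.map (fun _ : Unit => a) id) (Sum.map (fun _ : Unit => b) id)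
  have hminor : minor = fromBlocks (of fun _ _ : Unit => Z a b) 0 0 S := by
    ext (i | i) (j | j) <;> rfl
  have hdet : IsUnit minor.det := by
    rw [hminor, det_fromBlocks_zero₂₁, det_unique]
    exact (isUnit_iff_ne_zero.mpr hab).mul ((isUnit_iff_isUnit_det S).mp hS)
  have hle : minor.rank ≤ (fromBlocks Z 0 0 S).rank := rank_submatrix_le _ _ _
  rw [rank_of_isUnit _ ((isUnit_iff_isUnit_det _).mpr hdet), hrank, Fintype.card_sum,
    Fintype.card_unit] at hle
  omega

theorem eq_mul_inv_mul_of_rank_fromBlocks_eq_card [Fintype l] (P : Matrix l m K)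
    (Q : Matrix l n K) (R : Matrix n m K) {S : Matrix n n K} (hS : IsUnit S)
    (hrank : (fromBlocks P Q R S).rank = Fintype.card n) : P = Q * S⁻¹ * R := by
  classical
  obtain ⟨_⟩ := hS.nonempty_invertible
  have hL : IsUnit (fromBlocks (1 : Matrix l l K) (Q * ⅟S) 0 1).det := by simp
  have hU : IsUnit (fromBlocks (1 : Matrix m m K) 0 (⅟S * R) 1).det := by simp
  rw [fromBlocks_eq_of_invertible₂₂, rank_mul_eq_left_of_isUnit_det _ _ hU,
    rank_mul_eq_right_of_isUnit_det _ _ hL] at hrank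
  rw [← sub_eq_zero, ← invOf_eq_nonsing_inv]
  exact eq_zero_of_rank_fromBlocks_zero_eq_card _ hS hrank

theorem submatrix_union_reindex_eq_fromBlocks {V W α : Type*} [DecidableEq V] [DecidableEq W]
    (M : Matrix V W α) {A C : Finset V} {B D : Finset W} (hAC : Disjoint A C)
    (hBD : Disjoint B D) :
    (M.submatrix (fun i : ↥(A ∪ C) => (i : V)) (fun j : ↥(B ∪ D) => (j : W))).submatrix
        (Equiv.Finset.union A C hAC) (Equiv.Finset.union B D hBD) =
      fromBlocks (M.submatrix (↑) (↑) : Matrix A B α) (M.submatrix (↑) (↑) : Matrix A D α)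
        (M.submatrix (↑) (↑) : Matrix C B α) (M.submatrix (↑) (↑) : Matrix C D α) := by
  ext (i | i) (j | j) <;> rfl

end Matrix

theorem stmt8_general (V : Type) [DecidableEq V]
    (Cov : Matrix V V ℝ)
    (A B C : Finset V)
    (hAC : Disjoint A C) (hBC : Disjoint B C)
    (hrank : (Cov.submatrix (fun i : ↥(A ∪ C) => (i : V))
      (fun j : ↥(B ∪ C) => (j : V))).rank = C.card)
    (hinv : IsUnit (Cov.submatrix (fun i : ↥C => (i : V)) (fun j : ↥C => (j : V)))) :
    Cov.submatrix (fun i : ↥A => (i : V)) (fun j : ↥B => (j : V)) =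
      Cov.submatrix (fun i : ↥A => (i : V)) (fun j : ↥C => (j : V)) *
        (Cov.submatrix (fun i : ↥C => (i : V)) (fun j : ↥C => (j : V)))⁻¹ *
        Cov.submatrix (fun i : ↥C => (i : V)) (fun j : ↥B => (j : V)) := by
  refine eq_mul_inv_mul_of_rank_fromBlocks_eq_card _ _ _ hinv ?_
  rw [← submatrix_union_reindex_eq_fromBlocks Cov hAC hBC, rank_submatrix, hrank,
    Fintype.card_coe]

/-- If `Σ` is PSD over index set `V`, `A, B, C ⊆ V` are disjoint,
`rank Σ_{A∪C, B∪C} = |C|` and `Σ_{C,C}` is invertible, then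
`Σ_{A,B} = Σ_{A,C} Σ_{C,C}⁻¹ Σ_{C,B}`. -/
theorem stmt8 (V : Type) [Fintype V] [DecidableEq V]
    (Cov : Matrix V V ℝ) (hpsd : Cov.PosSemidef)
    (A B C : Finset V)
    (hAB : Disjoint A B) (hAC : Disjoint A C) (hBC : Disjoint B C)
    (hrank : (Cov.submatrix (fun i : ↥(A ∪ C) => (i : V))
      (fun j : ↥(B ∪ C) => (j : V))).rank = C.card)
    (hinv : IsUnit (Cov.submatrix (fun i : ↥C => (i : V)) (fun j : ↥C => (j : V)))) :
    Cov.submatrix (fun i : ↥A => (i : V)) (fun j : ↥B => (j : V)) =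
      Cov.submatrix (fun i : ↥A => (i : V)) (fun j : ↥C => (j : V)) *
        (Cov.submatrix (fun i : ↥C => (i : V)) (fun j : ↥C => (j : V)))⁻¹ *
        Cov.submatrix (fun i : ↥C => (i : V)) (fun j : ↥B => (j : V)) :=
  stmt8_general V Cov A B C hAC hBC hrank hinv
end

section
/- With Σ = (I − A)^{-1} Ω (I − A)^{-T} as the covariance of a linear SCM on a DAG, the entry Σ_{xy} equals the sum over treks (P₁,P₂) from x to y of the product ω_z · (product of edge coefficients along P₁) · (product of edge coefficients along P₂), where z is the common source of the trek (the trek rule). -/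
/-!
A strictly lower triangular `A` is nilpotent, so `(I - A)⁻¹ = ∑_{k<n} A^k`, and `(A^k) x z` is the
sum over walks of length `k` from `z` to `x` of the product of edge weights. Since `Ω` is diagonal,
`Σ x y = ∑_z (I - A)⁻¹ x z · ω_z · (I - A)⁻¹ y z`; expanding both factors into walks from the common
source `z` gives the sum over treks.
-/

open Finset

namespace Matrix

theorem pow_apply_eq_zero_of_lt_add {R : Type*} [Semiring R] {n : ℕ}
    {A : Matrix (Fin n) (Fin n) R} (hA : ∀ i j : Fin n, i ≤ j → A i j = 0) (k : ℕ)
    {i j : Fin n} (h : (i : ℕ) < j + k) : (A ^ k) i j = 0 := by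
  induction k generalizing i with
  | zero => exact one_apply_ne (by rintro rfl; omega)
  | succ k ih =>
    rw [pow_succ', mul_apply]
    refine sum_eq_zero fun m _ => ?_
    rcases le_or_gt i m with him | hmi
    · rw [hA i m him, zero_mul]
    · rw [ih (by omega), mul_zero]

theorem pow_card_eq_zero_of_strictlyLowerTriangular {R : Type*} [Semiring R] {n : ℕ}
    {A : Matrix (Fin n) (Fin n) R} (hA : ∀ i j : Fin n, i ≤ j → A i j = 0) : A ^ n = 0 := by
  ext i j
  exact pow_apply_eq_zero_of_lt_add hA n (by omega)

variable {ι R : Type*} [Fintype ι] [DecidableEq ι]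

theorem inv_one_sub_eq_sum_pow [CommRing R] {A : Matrix ι ι R} {n : ℕ} (hA : A ^ n = 0) :
    (1 - A)⁻¹ = ∑ k ∈ range n, A ^ k :=
  inv_eq_right_inv (by rw [mul_neg_geom_sum, hA, sub_zero])

variable [CommSemiring R]

theorem IsDiag.mul_mul_transpose_apply {D : Matrix ι ι R} (hD : D.IsDiag) (B C : Matrix ι ι R)
    (x y : ι) : (B * D * Cᵀ) x y = ∑ z, B x z * D z z * C y z := by
  conv_lhs => rw [← hD.diagonal_diag, mul_apply]
  simp only [mul_diagonal, transpose_apply, diag_apply]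

/-- `A i j` is the weight of the edge `j → i`; a walk with `k + 1` steps is its first vertex
prepended (`Fin.cons`) to a walk with `k` steps. -/
theorem pow_apply_eq_sum_walks (A : Matrix ι ι R) (k : ℕ) (x z : ι) :
    (A ^ k) x z = ∑ f : Fin (k + 1) → ι,
      if f 0 = z ∧ f (Fin.last k) = x then ∏ t : Fin k, A (f t.succ) (f t.castSucc) else 0 := by
  induction k generalizing x z with
  | zero =>
    rw [← (Equiv.funUnique (Fin 1) ι).symm.sum_comp]
    simp [one_apply, ite_and, eq_comm (a := z)]
  | succ k ih =>
    rw [pow_succ, mul_apply, ← (Fin.consEquiv fun _ => ι).sum_comp, Fintype.sum_prod_type]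
    simp only [ih, ite_and, sum_mul, ite_mul, zero_mul, Fin.consEquiv_apply, Fin.cons_zero,
      ← Fin.succ_last, Fin.cons_succ, Fin.prod_univ_succ, Fin.castSucc_zero, Fin.castSucc_succ,
      sum_ite_irrel, sum_const_zero, sum_ite_eq', mem_univ, ↓reduceIte]
    rw [sum_comm]
    simp only [mul_comm, sum_ite_eq, mem_univ, ↓reduceIte]

end Matrix

/-- The trek rule: for the covariance `Σ = (I - A)⁻¹ Ω (I - A)⁻ᵀ` of a linear
SCM on a DAG (coefficient matrix `A` strictly lower triangular, `Ω` diagonal),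
the entry `Σ x y` is the sum over treks `(P₁, P₂)` from `x` to `y` — pairs of
directed paths with common source `z`, encoded as vertex sequences ending at
`x` resp. `y` — of `ω_z` times the products of edge coefficients along `P₁`
and `P₂` (sequences that are not actual paths contribute `0`). -/
theorem stmt11 (n : ℕ) (A Om : Matrix (Fin n) (Fin n) ℝ)
    (hA : ∀ i j : Fin n, i ≤ j → A i j = 0)
    (hdiag : Om.IsDiag)
    (S : Matrix (Fin n) (Fin n) ℝ)
    (hS : S = (1 - A)⁻¹ * Om * ((1 - A)⁻¹).transpose) :
    ∀ x y : Fin n, S x y =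
      ∑ z : Fin n, ∑ k ∈ Finset.range n, ∑ l ∈ Finset.range n,
        ∑ f : Fin (k + 1) → Fin n, ∑ g : Fin (l + 1) → Fin n,
          if f 0 = z ∧ g 0 = z ∧ f (Fin.last k) = x ∧ g (Fin.last l) = y then
            Om z z * (∏ t : Fin k, A (f t.succ) (f t.castSucc)) *
              (∏ t : Fin l, A (g t.succ) (g t.castSucc))
          else 0 := by
  intro x y
  rw [hS, hdiag.mul_mul_transpose_apply,
    Matrix.inv_one_sub_eq_sum_pow (Matrix.pow_card_eq_zero_of_strictlyLowerTriangular hA)]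
  refine sum_congr rfl fun z _ => ?_
  have trek_sum_eq : ∀ k l, (∑ f : Fin (k + 1) → Fin n, ∑ g : Fin (l + 1) → Fin n,
      if f 0 = z ∧ g 0 = z ∧ f (Fin.last k) = x ∧ g (Fin.last l) = y then
        Om z z * (∏ t : Fin k, A (f t.succ) (f t.castSucc)) *
          (∏ t : Fin l, A (g t.succ) (g t.castSucc))
      else 0) = Om z z * ((A ^ k) x z * (A ^ l) y z) := by
    intro k l
    rw [Matrix.pow_apply_eq_sum_walks, Matrix.pow_apply_eq_sum_walks, sum_mul_sum, mul_sum]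
    refine sum_congr rfl fun f _ => ?_
    rw [mul_sum]
    refine sum_congr rfl fun g _ => ?_
    rw [ite_zero_mul_ite_zero, mul_ite, mul_zero, ← mul_assoc]
    exact if_congr (by tauto) rfl rfl
  simp only [trek_sum_eq]
  rw [Matrix.sum_apply, Matrix.sum_apply, sum_mul, sum_mul_sum]
  exact sum_congr rfl fun k _ => sum_congr rfl fun l _ => by ring
end

section
/- In a DAG G, if (∅, C) t-separates A from B and (∅, D) t-separates C from B, then (∅, D) t-separates A from B. -/
/-- A trek from `x` to `y` in the directed graph with edge relation `E`:
an ordered pair of directed paths `(p1, p2)` with a common source,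
`p1` ending at `x` and `p2` ending at `y`. -/
structure Trek {V : Type} (E : V → V → Prop) (x y : V) where
  source : V
  p1 : List V
  p2 : List V
  p1_chain : p1.Chain' E
  p2_chain : p2.Chain' E
  p1_head : p1.head? = some source
  p2_head : p2.head? = some source
  p1_last : p1.getLast? = some x
  p2_last : p2.getLast? = some y

/-- `(CA, CB)` t-separates `A` from `B`: every trek `(p1, p2)` from a vertex of
`A` to a vertex of `B` has `p1` meeting `CA` or `p2` meeting `CB`. -/
def TSeparates {V : Type} (E : V → V → Prop) (CA CB A B : Set V) : Prop :=
  ∀ a ∈ A, ∀ b ∈ B, ∀ t : Trek E a b,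
    (∃ v ∈ CA, v ∈ t.p1) ∨ (∃ v ∈ CB, v ∈ t.p2)

/-- The directed graph with edge relation `E` is acyclic. -/
def IsAcyclicRel {V : Type} (E : V → V → Prop) : Prop :=
  ∀ v, ¬ Relation.TransGen E v v

/-- Transitivity of one-sided t-separation: if `(∅, C)` t-separates `A` from
`B` and `(∅, D)` t-separates `C` from `B`, then `(∅, D)` t-separates `A` from
`B`. -/
theorem stmt13 {V : Type} (E : V → V → Prop) (hacyc : IsAcyclicRel E)
    (A B C D : Set V) (h1 : TSeparates E ∅ C A B) (h2 : TSeparates E ∅ D C B) :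
    TSeparates E ∅ D A B := by
  intro a ha b hb t
  rcases h1 a ha b hb t with ⟨v, hv, _⟩ | ⟨c, hc, hcp⟩
  · exact absurd hv (Set.notMem_empty v)
  -- extract suffix of t.p2 starting at c
  obtain ⟨pre, suf, hsplit⟩ := List.append_of_mem hcp
  have hsuffix : (c :: suf) <:+ t.p2 := ⟨pre, hsplit.symm⟩
  have hchain : (c :: suf).Chain' E := t.p2_chain.suffix hsuffix
  have hlast : (c :: suf).getLast? = some b := by
    have := t.p2_last
    rw [hsplit, List.getLast?_append_cons] at this
    exact this
  let t' : Trek E c b :=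
    { source := c, p1 := [c], p2 := c :: suf,
      p1_chain := List.isChain_singleton c,
      p2_chain := hchain,
      p1_head := rfl, p2_head := rfl,
      p1_last := rfl, p2_last := hlast }
  rcases h2 c hc b hb t' with ⟨v, hv, _⟩ | ⟨d, hd, hdp⟩
  · exact absurd hv (Set.notMem_empty v)
  · exact Or.inr ⟨d, hd, hsuffix.subset hdp⟩
end

section
/- In a DAG G with vertex set V, let De(S) denote the strict descendants of set S (vertices reachable by a nonempty directed path from S). If C ⊆ PCh(A) is a set of pure children of A (every parent of every vertex in C lies in A) and no vertex of B is in De(C) ∪ C, then every trek from C to B contains a vertex of A on its C-side path. Hence (A, ∅) t-separates C from B. -/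
/-!
If a trek from `c ∈ C` to `b` had no parent of `c` on its `C`-side path, that path would be the
trivial path `[c]`; the trek would then be a directed path from `c` to `b`, so `b` would be `c`
or a descendant of `c`, which the hypothesis on `B` excludes.
-/

namespace List.IsChain

variable {α : Type*} {r : α → α → Prop} {l : List α} {a b : α}

theorem reflTransGen_of_head?_of_getLast? (hl : l.IsChain r) (ha : l.head? = some a)
    (hb : l.getLast? = some b) : Relation.ReflTransGen r a b := by
  obtain ⟨t, rfl⟩ := List.head?_eq_some_iff.1 ha
  refine List.relationReflTransGen_of_exists_isChain_cons t hl ?_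
  simpa [List.getLast?_eq_some_getLast] using hb

theorem eq_singleton_or_exists_rel_getLast (hl : l.IsChain r) (hb : l.getLast? = some b) :
    l = [b] ∨ ∃ u ∈ l, r u b := by
  induction l with
  | nil => simp at hb
  | cons x t ih =>
    cases t with
    | nil => exact .inl (by simpa using hb)
    | cons y t =>
      rw [List.isChain_cons_cons] at hl
      rcases ih hl.2 (by simpa using hb) with h | ⟨u, hu, hub⟩
      · cases h
        exact .inr ⟨x, List.mem_cons_self, hl.1⟩
      · exact .inr ⟨u, List.mem_cons_of_mem x hu, hub⟩

end List.IsChain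

namespace Trek

variable {V : Type} {E : V → V → Prop} {x y : V}

theorem reflTransGen_source_right (t : Trek E x y) : Relation.ReflTransGen E t.source y :=
  t.p2_chain.reflTransGen_of_head?_of_getLast? t.p2_head t.p2_last

theorem exists_rel_mem_p1_or_reflTransGen (t : Trek E x y) :
    (∃ u ∈ t.p1, E u x) ∨ Relation.ReflTransGen E x y := by
  rcases t.p1_chain.eq_singleton_or_exists_rel_getLast t.p1_last with h | h
  · have hsource : t.source = x := by simpa [h] using t.p1_head.symm
    exact .inr (hsource ▸ t.reflTransGen_source_right)
  · exact .inl h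

end Trek

theorem stmt16_general {V : Type} (E : V → V → Prop)
    (A C B : Set V)
    (hPC : ∀ c ∈ C, ∀ u : V, E u c → u ∈ A)
    (hB : ∀ b ∈ B, b ∉ C ∧ ¬ ∃ c ∈ C, Relation.TransGen E c b) :
    TSeparates E A ∅ C B := by
  intro c hc b hb t
  left
  rcases t.exists_rel_mem_p1_or_reflTransGen with ⟨u, hu, huc⟩ | hcb
  · exact ⟨u, hPC c hc u huc, hu⟩
  · exfalso
    rcases Relation.reflTransGen_iff_eq_or_transGen.1 hcb with rfl | hcb
    · exact (hB b hb).1 hc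
    · exact (hB b hb).2 ⟨c, hc, hcb⟩

/-- If every parent of every vertex of `C` lies in `A` (`C` consists of pure
children of `A`) and no vertex of `B` lies in `C` or is a descendant of `C`,
then every trek from `C` to `B` meets `A` on its `C`-side path: `(A, ∅)`
t-separates `C` from `B`. -/
theorem stmt16 {V : Type} (E : V → V → Prop) (hacyc : IsAcyclicRel E)
    (A C B : Set V)
    (hPC : ∀ c ∈ C, ∀ u : V, E u c → u ∈ A)
    (hB : ∀ b ∈ B, b ∉ C ∧ ¬ ∃ c ∈ C, Relation.TransGen E c b) :
    TSeparates E A ∅ C B :=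
  stmt16_general E A C B hPC hB
end

section
/- Let G be a DAG and consider a linear SCM on G with covariance matrix Σ. Suppose every trek from A to B passes through C := C_A ∪ C_B with C_A on the A-side and C_B on the B-side, and suppose C_A = C and C_B = ∅. Then Σ_{A,B} = P Σ_{C,B} for some |A|×|C| real matrix P, hence rank(Σ_{A,B}) ≤ |C|. -/
/-- Powers of a strictly lower triangular matrix vanish above a shifted diagonal. -/
lemma tri_pow_eq_zero {n : ℕ} (G : Matrix (Fin n) (Fin n) ℝ)
    (h : ∀ i j : Fin n, i ≤ j → G i j = 0) :
    ∀ k : ℕ, ∀ i j : Fin n, (i : ℕ) < (j : ℕ) + k → (G ^ k) i j = 0 := by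
  intro k
  induction k with
  | zero =>
    intro i j hij
    have : i ≠ j := by
      intro e; subst e; simp at hij
    simp [Matrix.one_apply_ne this]
  | succ k ih =>
    intro i j hij
    rw [pow_succ, Matrix.mul_apply]
    apply Finset.sum_eq_zero
    intro l _
    by_cases hl : l ≤ j
    · rw [h l j hl, mul_zero]
    · have hjl : (j : ℕ) < (l : ℕ) := by
        exact_mod_cast lt_of_not_ge hl
      have : (i : ℕ) < (l : ℕ) + k := by omega
      rw [ih i l this, zero_mul]

lemma tri_pow_n {n : ℕ} (G : Matrix (Fin n) (Fin n) ℝ)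
    (h : ∀ i j : Fin n, i ≤ j → G i j = 0) : G ^ n = 0 := by
  ext i j
  have := tri_pow_eq_zero G h n i j (by omega)
  simpa using this

lemma geom_inv {n : ℕ} (G : Matrix (Fin n) (Fin n) ℝ)
    (h : ∀ i j : Fin n, i ≤ j → G i j = 0) :
    (1 - G) * (∑ k ∈ Finset.range n, G ^ k) = 1 ∧
    (∑ k ∈ Finset.range n, G ^ k) * (1 - G) = 1 := by
  have h1 := mul_geom_sum G n
  have h2 := geom_sum_mul G n
  rw [tri_pow_n G h] at h1 h2
  constructor
  · have h3 : (1 - G) * ∑ k ∈ Finset.range n, G ^ k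
        = -((G - 1) * ∑ k ∈ Finset.range n, G ^ k) := by noncomm_ring
    rw [h3, h1]; simp
  · have h3 : (∑ k ∈ Finset.range n, G ^ k) * (1 - G)
        = -((∑ k ∈ Finset.range n, G ^ k) * (G - 1)) := by noncomm_ring
    rw [h3, h2]; simp

/-- A nonzero entry of a power of a matrix yields a directed path (as a list). -/
lemma pow_entry_path {n : ℕ} (G : Matrix (Fin n) (Fin n) ℝ)
    (E : Fin n → Fin n → Prop) (pred : Fin n → Prop)
    (hG : ∀ u v : Fin n, G v u ≠ 0 → E u v ∧ pred v) :
    ∀ k : ℕ, ∀ x y : Fin n, (G ^ k) y x ≠ 0 →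
      ∃ p : List (Fin n), p.Chain' E ∧ p.head? = some x ∧ p.getLast? = some y ∧
        ∀ v ∈ p, v = x ∨ pred v := by
  intro k
  induction k with
  | zero =>
    intro x y h
    have hxy : y = x := by
      by_contra hne
      rw [pow_zero, Matrix.one_apply_ne hne] at h
      exact h rfl
    subst hxy
    exact ⟨[y], List.isChain_singleton y, rfl, rfl, by simp⟩
  | succ k ih =>
    intro x y h
    rw [pow_succ', Matrix.mul_apply] at h
    obtain ⟨l, -, hl⟩ := Finset.exists_ne_zero_of_sum_ne_zero h
    have hGyl : G y l ≠ 0 := fun h0 => hl (by rw [h0, zero_mul])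
    have hGk : (G ^ k) l x ≠ 0 := fun h0 => hl (by rw [h0, mul_zero])
    obtain ⟨hE, hpred⟩ := hG l y hGyl
    obtain ⟨p, hchain, hhead, hlast, hmem⟩ := ih x l hGk
    have hpne : p ≠ [] := by
      intro h0; rw [h0] at hhead; simp at hhead
    refine ⟨p ++ [y], ?_, ?_, ?_, ?_⟩
    · refine List.IsChain.append hchain (List.isChain_singleton y) ?_
      intro a ha b hb
      rw [hlast] at ha
      simp at ha hb
      subst ha; subst hb; exact hE
    · rw [List.head?_append, hhead]; rfl
    · exact List.getLast?_concat
    · intro v hv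
      rcases List.mem_append.mp hv with hv | hv
      · exact hmem v hv
      · simp at hv; subst hv; exact Or.inr hpred

/-- Half of the trek-separation theorem for a linear SCM: if `(C, ∅)`
t-separates `A` from `B` (every trek from `A` to `B` meets `C` on its `A`-side
path, in the graph with an edge `u → v` whenever the coefficient `W v u ≠ 0`),
then the cross-covariance factors as `Σ_{A,B} = P * Σ_{C,B}` for some matrix
`P`, and hence `rank Σ_{A,B} ≤ |C|`. -/
theorem stmt19 (n : ℕ) (W Om : Matrix (Fin n) (Fin n) ℝ)
    (hW : ∀ i j : Fin n, i ≤ j → W i j = 0) (hdiag : Om.IsDiag)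
    (S : Matrix (Fin n) (Fin n) ℝ)
    (hS : S = (1 - W)⁻¹ * Om * ((1 - W)⁻¹).transpose)
    (Sa Sb Sc : Finset (Fin n))
    (hsep : TSeparates (fun u v => W v u ≠ 0) ↑Sc ∅ ↑Sa ↑Sb) :
    (∃ P : Matrix ↥Sa ↥Sc ℝ,
      S.submatrix (fun i : ↥Sa => (i : Fin n)) (fun j : ↥Sb => (j : Fin n)) =
        P * S.submatrix (fun i : ↥Sc => (i : Fin n)) (fun j : ↥Sb => (j : Fin n))) ∧
    (S.submatrix (fun i : ↥Sa => (i : Fin n)) (fun j : ↥Sb => (j : Fin n))).rank ≤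
      Sc.card := by
  classical
  -- abbreviations
  set M : Matrix (Fin n) (Fin n) ℝ := ∑ k ∈ Finset.range n, W ^ k with hM
  set e : Fin n → ℝ := fun v => if v ∈ Sc then 0 else 1 with he
  set Ed : Matrix (Fin n) (Fin n) ℝ := Matrix.diagonal e with hEd
  set N : Matrix (Fin n) (Fin n) ℝ := ∑ k ∈ Finset.range n, (Ed * W) ^ k with hN
  have hEW : ∀ i j : Fin n, i ≤ j → (Ed * W) i j = 0 := by
    intro i j hij
    rw [hEd, Matrix.diagonal_mul, hW i j hij, mul_zero]
  obtain ⟨hWM, hMW⟩ := geom_inv W hW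
  obtain ⟨hEN, hNE⟩ := geom_inv (Ed * W) hEW
  -- (1 - W)⁻¹ = M
  have hinv : (1 - W)⁻¹ = M := Matrix.inv_eq_right_inv hWM
  rw [hinv] at hS
  -- W * M = M - 1
  have hWM1 : W * M = M - 1 := by
    have : M - W * M = 1 := by
      have := hWM; rwa [sub_mul, one_mul] at this
    linear_combination (norm := noncomm_ring) -this
  -- key algebraic identity : M = N * ((1 - Ed) * M + Ed)
  have hkey : M = N * ((1 - Ed) * M + Ed) := by
    have h1 : (1 - Ed) * M + Ed = (1 - Ed * W) * M := by
      rw [sub_mul, one_mul, sub_mul, one_mul, mul_assoc, hWM1, mul_sub, mul_one]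
      noncomm_ring
    rw [h1, ← mul_assoc, hNE, one_mul]
  -- nonzero entries of M give paths
  have hMpath : ∀ s y : Fin n, M y s ≠ 0 →
      ∃ p : List (Fin n), p.Chain' (fun u v => W v u ≠ 0) ∧ p.head? = some s ∧
        p.getLast? = some y := by
    intro s y hy
    rw [hM, Matrix.sum_apply] at hy
    obtain ⟨k, -, hk⟩ := Finset.exists_ne_zero_of_sum_ne_zero hy
    obtain ⟨p, h1, h2, h3, -⟩ := pow_entry_path W (fun u v => W v u ≠ 0)
      (fun _ => True) (fun u v h => ⟨h, trivial⟩) k s y hk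
    exact ⟨p, h1, h2, h3⟩
  -- nonzero entries of N give C-avoiding paths
  have hNpath : ∀ s y : Fin n, N y s ≠ 0 →
      ∃ p : List (Fin n), p.Chain' (fun u v => W v u ≠ 0) ∧ p.head? = some s ∧
        p.getLast? = some y ∧ ∀ v ∈ p, v = s ∨ v ∉ Sc := by
    intro s y hy
    rw [hN, Matrix.sum_apply] at hy
    obtain ⟨k, -, hk⟩ := Finset.exists_ne_zero_of_sum_ne_zero hy
    refine pow_entry_path (Ed * W) (fun u v => W v u ≠ 0) (fun v => v ∉ Sc)
      ?_ k s y hk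
    intro u v h
    rw [hEd, Matrix.diagonal_mul] at h
    constructor
    · intro h0; rw [h0, mul_zero] at h; exact h rfl
    · intro hv
      rw [he] at h; simp only [hv, if_pos] at h
      exact h (by rw [zero_mul])
  -- the error term vanishes on A × B
  have hzero : ∀ a ∈ Sa, ∀ b ∈ Sb, ∀ s : Fin n,
      N a s * (e s * (Om s s * M b s)) = 0 := by
    intro a ha b hb s
    by_cases hsC : s ∈ Sc
    · rw [he]; simp [hsC]
    by_cases hNs : N a s = 0
    · rw [hNs, zero_mul]
    by_cases hMs : M b s = 0
    · rw [hMs, mul_zero, mul_zero, mul_zero]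
    exfalso
    obtain ⟨p1, hc1, hh1, hl1, hm1⟩ := hNpath s a hNs
    obtain ⟨p2, hc2, hh2, hl2⟩ := hMpath s b hMs
    have := hsep a (by exact_mod_cast ha) b (by exact_mod_cast hb)
      ⟨s, p1, p2, hc1, hc2, hh1, hh2, hl1, hl2⟩
    rcases this with ⟨v, hvC, hvp⟩ | ⟨v, hvC, -⟩
    · rcases hm1 v hvp with rfl | hv
      · exact hsC (by exact_mod_cast hvC)
      · exact hv (by exact_mod_cast hvC)
    · exact hvC
  -- entrywise factorization
  have hfact : ∀ a ∈ Sa, ∀ b ∈ Sb,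
      S a b = ∑ c ∈ Sc, N a c * S c b := by
    intro a ha b hb
    have hSd : S = N * ((1 - Ed) * S) + N * (Ed * (Om * M.transpose)) := by
      rw [hS]
      calc M * Om * M.transpose
          = (N * ((1 - Ed) * M + Ed)) * Om * M.transpose := by rw [← hkey]
        _ = N * ((1 - Ed) * (M * Om * M.transpose))
              + N * (Ed * (Om * M.transpose)) := by noncomm_ring
    have hF : (1 : Matrix (Fin n) (Fin n) ℝ) - Ed
        = Matrix.diagonal (fun v => if v ∈ Sc then (1:ℝ) else 0) := by
      ext i j
      by_cases hij : i = j
      · subst hij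
        simp only [Matrix.sub_apply, Matrix.one_apply_eq, hEd,
          Matrix.diagonal_apply_eq, he]
        by_cases hi : i ∈ Sc <;> simp [hi]
      · simp [Matrix.sub_apply, Matrix.one_apply_ne hij, hEd,
          Matrix.diagonal_apply_ne _ hij]
    have hOm : Om = Matrix.diagonal Om.diag := hdiag.diagonal_diag.symm
    have hterm : (N * (Ed * (Om * M.transpose))) a b = 0 := by
      rw [Matrix.mul_apply]
      apply Finset.sum_eq_zero
      intro s _
      have hEdapp : (Ed * (Om * M.transpose)) s b = e s * (Om s s * M b s) := by
        rw [hEd, Matrix.diagonal_mul]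
        congr 1
        conv_lhs => rw [hOm, Matrix.diagonal_mul]
        simp [Matrix.diag, Matrix.transpose_apply]
      rw [hEdapp]
      exact hzero a ha b hb s
    have hmain : (N * ((1 - Ed) * S)) a b = ∑ c ∈ Sc, N a c * S c b := by
      rw [Matrix.mul_apply]
      have hrw : ∀ s : Fin n, ((1 - Ed) * S) s b
          = (if s ∈ Sc then (1:ℝ) else 0) * S s b := by
        intro s
        rw [hF, Matrix.diagonal_mul]
      calc ∑ s, N a s * ((1 - Ed) * S) s b
          = ∑ s, N a s * ((if s ∈ Sc then (1:ℝ) else 0) * S s b) := by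
            refine Finset.sum_congr rfl fun s _ => by rw [hrw]
        _ = ∑ c ∈ Sc, N a c * S c b := by
            rw [← Finset.sum_subset (Finset.subset_univ Sc)]
            · refine Finset.sum_congr rfl fun s hs => by simp [hs]
            · intro s _ hs
              simp [hs]
    have : S a b = (N * ((1 - Ed) * S)) a b + (N * (Ed * (Om * M.transpose))) a b := by
      conv_lhs => rw [hSd]
      rfl
    rw [this, hterm, add_zero, hmain]
  -- conclude
  have hPeq : S.submatrix (fun i : ↥Sa => (i : Fin n)) (fun j : ↥Sb => (j : Fin n)) =
      (N.submatrix (fun i : ↥Sa => (i : Fin n)) (fun j : ↥Sc => (j : Fin n))) *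
        S.submatrix (fun i : ↥Sc => (i : Fin n)) (fun j : ↥Sb => (j : Fin n)) := by
    ext a b
    rw [Matrix.mul_apply, Matrix.submatrix_apply]
    rw [hfact a a.2 b b.2]
    rw [← Finset.sum_coe_sort Sc (fun c => N a c * S c b)]
    rfl
  refine ⟨⟨_, hPeq⟩, ?_⟩
  rw [hPeq]
  calc (_ * S.submatrix (fun i : ↥Sc => (i : Fin n)) (fun j : ↥Sb => (j : Fin n))).rank
      ≤ (S.submatrix (fun i : ↥Sc => (i : Fin n)) (fun j : ↥Sb => (j : Fin n))).rank :=
        Matrix.rank_mul_le_right _ _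
    _ ≤ Sc.card := by
        have := Matrix.rank_le_card_height
          (S.submatrix (fun i : ↥Sc => (i : Fin n)) (fun j : ↥Sb => (j : Fin n)))
        simpa using this
end
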